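/- A generalized topological space (Y, γ) is sλ-regular if and only if every sλ-closed set P satisfies P = ⋂{ cl_sλ(F) : P ⊆ F, F sλ-open }. -/
import Mathlib


open Set

variable {Y : Type*}

/-- A generalized topology: contains ∅ and is closed under arbitrary unions. -/
def IsGT (γ : Set (Set Y)) : Prop := ∅ ∈ γ ∧ ∀ S ⊆ γ, ⋃₀ S ∈ γ

/-- γ-closure: intersection of all γ-closed supersets. -/
def gCl (γ : Set (Set Y)) (D : Set Y) : Set Y := ⋂₀ {C | Cᶜ ∈ γ ∧ D ⊆ C}

/-- sγ-open set. -/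
def SOpen (γ : Set (Set Y)) (D : Set Y) : Prop := ∃ V ∈ γ, V ⊆ D ∧ D ⊆ gCl γ V

/-- sγ-closed set. -/
def SClosed (γ : Set (Set Y)) (D : Set Y) : Prop := SOpen γ Dᶜ

/-- semi-kernel: intersection of all sγ-open supersets. -/
def sKer (γ : Set (Set Y)) (D : Set Y) : Set Y := ⋂₀ {G | SOpen γ G ∧ D ⊆ G}

/-- sγ-closure: intersection of all sγ-closed supersets. -/
def sCl (γ : Set (Set Y)) (D : Set Y) : Set Y := ⋂₀ {C | SClosed γ C ∧ D ⊆ C}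

/-- sλ-closed set. -/
def SLClosed (γ : Set (Set Y)) (D : Set Y) : Prop :=
  ∃ M N : Set Y, M = sKer γ M ∧ SClosed γ N ∧ D = M ∩ N

/-- sλ-open set. -/
def SLOpen (γ : Set (Set Y)) (D : Set Y) : Prop := SLClosed γ Dᶜ

/-- sλ-closure: intersection of all sλ-closed supersets. -/
def slCl (γ : Set (Set Y)) (D : Set Y) : Set Y := ⋂₀ {C | SLClosed γ C ∧ D ⊆ C}

/-- sλ-interior: union of all sλ-open subsets. -/
def slInt (γ : Set (Set Y)) (D : Set Y) : Set Y := ⋃₀ {U | SLOpen γ U ∧ U ⊆ D}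

/-- sg_λ-closed set. -/
def SgClosed (γ : Set (Set Y)) (D : Set Y) : Prop :=
  ∀ V : Set Y, SLOpen γ V → D ⊆ V → slCl γ D ⊆ V

/-- sg_λ-open set. -/
def SgOpen (γ : Set (Set Y)) (D : Set Y) : Prop := SgClosed γ Dᶜ

/-- sλR₀: every sλ-open set contains the sλ-closure of each of its singletons. -/
def SLR0 (γ : Set (Set Y)) : Prop :=
  ∀ G : Set Y, SLOpen γ G → ∀ y ∈ G, slCl γ {y} ⊆ G

/-- sλR₁. -/
def SLR1 (γ : Set (Set Y)) : Prop :=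
  ∀ p q : Y, p ∉ slCl γ {q} →
    ∃ E F : Set Y, SLOpen γ E ∧ SLOpen γ F ∧ p ∈ E ∧ q ∈ F ∧ E ∩ F = ∅

/-- sλT₁. -/
def SLT1 (γ : Set (Set Y)) : Prop :=
  ∀ p q : Y, p ≠ q →
    ∃ E F : Set Y, SLOpen γ E ∧ SLOpen γ F ∧ p ∈ E ∧ q ∉ E ∧ q ∈ F ∧ p ∉ F

/-- sλT₂ (sλ-Hausdorff). -/
def SLT2 (γ : Set (Set Y)) : Prop :=
  ∀ p q : Y, p ≠ q →
    ∃ E F : Set Y, SLOpen γ E ∧ SLOpen γ F ∧ p ∈ E ∧ q ∈ F ∧ E ∩ F = ∅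

/-- sλ-regular. -/
def SLRegular (γ : Set (Set Y)) : Prop :=
  ∀ A : Set Y, SLClosed γ A → ∀ p : Y, p ∉ A →
    ∃ E F : Set Y, SLOpen γ E ∧ SLOpen γ F ∧ A ⊆ E ∧ p ∈ F ∧
      slCl γ E ∩ slCl γ F = ∅

/-- sλ-normal. -/
def SLNormal (γ : Set (Set Y)) : Prop :=
  ∀ A B : Set Y, SLClosed γ A → SLClosed γ B → A ∩ B = ∅ →
    ∃ E F : Set Y, SLOpen γ E ∧ SLOpen γ F ∧ A ⊆ E ∧ B ⊆ F ∧
      slCl γ E ∩ slCl γ F = ∅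

/-- sλ-compact. -/
def SLCompact (γ : Set (Set Y)) : Prop :=
  ∀ 𝒞 : Set (Set Y), (∀ U ∈ 𝒞, SLOpen γ U) → ⋃₀ 𝒞 = univ →
    ∃ 𝒟 : Finset (Set Y), ↑𝒟 ⊆ 𝒞 ∧ ⋃₀ (𝒟 : Set (Set Y)) = univ

/-- sλ-weakly separated. -/
def SLWeaklySeparated (γ : Set (Set Y)) (G H : Set Y) : Prop :=
  (G ∩ slCl γ H) ∪ (H ∩ slCl γ G) = ∅

/-- sλ-completely normal. -/
def SLCompletelyNormal (γ : Set (Set Y)) : Prop :=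
  ∀ G H : Set Y, SLWeaklySeparated γ G H →
    ∃ U V : Set Y, SLOpen γ U ∧ SLOpen γ V ∧ G ⊆ U ∧ H ⊆ V ∧
      slCl γ U ∩ slCl γ V = ∅

/-- sλ-continuous real-valued function. -/
def SLContinuousReal (γ : Set (Set Y)) (f : Y → ℝ) : Prop :=
  ∀ s : Set ℝ, IsOpen s → SLOpen γ (f ⁻¹' s)

lemma subset_slCl' (γ : Set (Set Y)) (D : Set Y) : D ⊆ slCl γ D :=
  fun _ hx _ hC => hC.2 hx

lemma slCl_min' {γ : Set (Set Y)} {C D : Set Y} (hC : SLClosed γ C) (h : D ⊆ C) :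
    slCl γ D ⊆ C := sInter_subset_of_mem ⟨hC, h⟩

lemma subset_sKer' (γ : Set (Set Y)) (D : Set Y) : D ⊆ sKer γ D :=
  fun _ hx _ hC => hC.2 hx

lemma sKer_min' {γ : Set (Set Y)} {G D : Set Y} (hG : SOpen γ G) (h : D ⊆ G) :
    sKer γ D ⊆ G := sInter_subset_of_mem ⟨hG, h⟩

lemma gCl_mono' {γ : Set (Set Y)} {A B : Set Y} (h : A ⊆ B) : gCl γ A ⊆ gCl γ B :=
  fun _ hx C hC => hx C ⟨hC.1, h.trans hC.2⟩

lemma sOpen_sUnion' {γ : Set (Set Y)} (hγ : IsGT γ) {S : Set (Set Y)}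
    (h : ∀ D ∈ S, SOpen γ D) : SOpen γ (⋃₀ S) := by
  choose V hVγ hVsub hVcl using h
  refine ⟨⋃₀ {W | ∃ D, ∃ hD : D ∈ S, W = V D hD}, ?_, ?_, ?_⟩
  · exact hγ.2 _ (by rintro W ⟨D, hD, rfl⟩; exact hVγ D hD)
  · rintro x hx
    obtain ⟨W, ⟨D, hD, rfl⟩, hxW⟩ := hx
    exact ⟨D, hD, hVsub D hD hxW⟩
  · rintro x ⟨D, hD, hxD⟩
    have hsub : V D hD ⊆ ⋃₀ {W | ∃ D, ∃ hD : D ∈ S, W = V D hD} :=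
      fun y hy => ⟨V D hD, ⟨D, hD, rfl⟩, hy⟩
    exact gCl_mono' hsub (hVcl D hD hxD)

lemma slClosed_sInter' {γ : Set (Set Y)} (hγ : IsGT γ) {T : Set (Set Y)}
    (h : ∀ D ∈ T, SLClosed γ D) : SLClosed γ (⋂₀ T) := by
  choose M N hM hN hMN using h
  refine ⟨⋂₀ {W | ∃ D, ∃ hD : D ∈ T, W = M D hD},
         ⋂₀ {W | ∃ D, ∃ hD : D ∈ T, W = N D hD}, ?_, ?_, ?_⟩
  · apply Subset.antisymm (subset_sKer' γ _)
    intro x hx W hW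
    obtain ⟨D, hD, rfl⟩ := hW
    have h1 : (⋂₀ {W | ∃ D, ∃ hD : D ∈ T, W = M D hD}) ⊆ M D hD :=
      sInter_subset_of_mem ⟨D, hD, rfl⟩
    have : sKer γ (⋂₀ {W | ∃ D, ∃ hD : D ∈ T, W = M D hD}) ⊆ sKer γ (M D hD) :=
      fun y hy G hG => hy G ⟨hG.1, h1.trans hG.2⟩
    have h2 := this hx
    rw [← hM D hD] at h2
    exact h2
  · unfold SClosed
    have : (⋂₀ {W | ∃ D, ∃ hD : D ∈ T, W = N D hD})ᶜ
        = ⋃₀ {W | ∃ D, ∃ hD : D ∈ T, W = (N D hD)ᶜ} := by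
      ext x
      simp only [mem_compl_iff, mem_sInter, mem_sUnion, mem_setOf_eq, not_forall]
      constructor
      · rintro ⟨W, ⟨D, hD, rfl⟩, hx⟩
        exact ⟨(N D hD)ᶜ, ⟨D, hD, rfl⟩, hx⟩
      · rintro ⟨W, ⟨D, hD, rfl⟩, hx⟩
        exact ⟨N D hD, ⟨D, hD, rfl⟩, hx⟩
    rw [this]
    exact sOpen_sUnion' hγ (by rintro W ⟨D, hD, rfl⟩; exact hN D hD)
  · ext x
    simp only [mem_sInter, mem_inter_iff, mem_setOf_eq]
    constructor
    · intro hx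
      constructor
      · rintro W ⟨D, hD, rfl⟩
        exact ((hMN D hD ▸ hx D hD : x ∈ M D hD ∩ N D hD)).1
      · rintro W ⟨D, hD, rfl⟩
        exact ((hMN D hD ▸ hx D hD : x ∈ M D hD ∩ N D hD)).2
    · rintro ⟨h1, h2⟩ D hD
      rw [hMN D hD]
      exact ⟨h1 _ ⟨D, hD, rfl⟩, h2 _ ⟨D, hD, rfl⟩⟩

lemma slClosed_slCl' {γ : Set (Set Y)} (hγ : IsGT γ) (D : Set Y) :
    SLClosed γ (slCl γ D) :=
  slClosed_sInter' hγ (fun _ hC => hC.1)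

theorem stmt5 (γ : Set (Set Y)) (hγ : IsGT γ) :
    SLRegular γ ↔
      ∀ P : Set Y, SLClosed γ P →
        P = ⋂₀ {C : Set Y | ∃ F : Set Y, SLOpen γ F ∧ P ⊆ F ∧ C = slCl γ F} := by
  constructor
  · intro hreg P hP
    apply Subset.antisymm
    · rintro x hx C ⟨F, _, hPF, rfl⟩
      exact subset_slCl' γ F (hPF hx)
    · intro x hx
      by_contra hxP
      obtain ⟨E, F, hE, hF, hPE, hxF, hdisj⟩ := hreg P hP x hxP
      have hxE : x ∈ slCl γ E := hx _ ⟨E, hE, hPE, rfl⟩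
      have : x ∈ slCl γ E ∩ slCl γ F := ⟨hxE, subset_slCl' γ F hxF⟩
      rw [hdisj] at this
      exact this
  · intro h A hA p hp
    -- first application: get F open with A ⊆ F and p ∉ slCl F
    have h1 := h A hA
    rw [h1] at hp
    simp only [mem_sInter, mem_setOf_eq, not_forall] at hp
    obtain ⟨C, ⟨F, hFopen, hAF, rfl⟩, hpF⟩ := hp
    -- second application: slCl F is SLClosed, p ∉ slCl F
    have hclF : SLClosed γ (slCl γ F) := slClosed_slCl' hγ F
    have h2 := h (slCl γ F) hclF
    rw [h2] at hpF
    simp only [mem_sInter, mem_setOf_eq, not_forall] at hpF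
    obtain ⟨C, ⟨G, hGopen, hFG, rfl⟩, hpG⟩ := hpF
    refine ⟨F, (slCl γ G)ᶜ, hFopen, ?_, hAF, hpG, ?_⟩
    · show SLClosed γ (slCl γ G)ᶜᶜ
      rw [compl_compl]
      exact slClosed_slCl' hγ G
    · have hGc : SLClosed γ Gᶜ := hGopen
      have hsub1 : slCl γ F ⊆ G := hFG
      have hsub2 : slCl γ (slCl γ G)ᶜ ⊆ Gᶜ := by
        apply slCl_min' hGc
        intro x hx
        exact fun hxG => hx (subset_slCl' γ G hxG)
      apply eq_empty_of_subset_empty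
      rintro x ⟨hx1, hx2⟩
      exact hsub2 hx2 (hsub1 hx1)
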